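/- arXiv:2602.05272 — 4 statements merged into one kernel-verified Lean document; each statement's English description precedes it below -/
import Mathlib

section
/- Conditional change of measure at a stopping time (Lemma 2.4, third claim): Let P, Q be probability measures on 𝒳 with Q ≪ P, let k ≥ 1, and let T be a stopping time with respect to (F_n) such that P^∞(T ≥ k) > 0. Then for every A ∈ F_T with A ⊆ {T < ∞}, one has ℙ^{(P)}_{k,Q}(A | T ≥ k) = E_{P^∞}[ e^{L_{k,T}} 1_A | T ≥ k ], where on the event {T = n} the random variable L_{k,T} equals L_{k:n}. -/
open MeasureTheory Filter Set
open scoped ENNReal NNReal Classical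

noncomputable section

variable {𝒳 : Type*} [MeasurableSpace 𝒳]

/-- The natural filtration `F n = σ(X_1, …, X_n)` on `Ω = 𝒳^ℕ`, where `X_i ω = ω (i-1)`. -/
def natF (𝒳 : Type*) [MeasurableSpace 𝒳] (n : ℕ) : MeasurableSpace (ℕ → 𝒳) :=
  MeasurableSpace.comap (fun ω (i : Fin n) => ω (i : ℕ)) inferInstance

/-- `T` is a stopping time with respect to the natural filtration `(F_n)`. -/
def IsStopping (𝒳 : Type*) [MeasurableSpace 𝒳] (T : (ℕ → 𝒳) → ℕ∞) : Prop :=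
  ∀ n : ℕ, MeasurableSet[natF 𝒳 n] {ω | T ω ≤ (n : ℕ∞)}

/-- `μ` is the i.i.d. infinite product `P^∞`: every finite-dimensional marginal is the
corresponding product of copies of `P`. -/
def IsIID (P : Measure 𝒳) (μ : Measure (ℕ → 𝒳)) : Prop :=
  IsProbabilityMeasure μ ∧
    ∀ n : ℕ, Measure.map (fun ω (i : Fin n) => ω (i : ℕ)) μ = Measure.pi fun _ : Fin n => P

/-- `μ` is the changepoint law `ℙ^{(P)}_{k,Q}`: `X_1,…,X_{k-1}` are i.i.d. `P` and
`X_k, X_{k+1}, …` are i.i.d. `Q`. -/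
def IsChange (P Q : Measure 𝒳) (k : ℕ) (μ : Measure (ℕ → 𝒳)) : Prop :=
  IsProbabilityMeasure μ ∧
    ∀ n : ℕ, Measure.map (fun ω (i : Fin n) => ω (i : ℕ)) μ
      = Measure.pi fun i : Fin n => if (i : ℕ) + 1 < k then P else Q

/-- Kullback–Leibler divergence `KL(Q‖P)`, valued in `ℝ≥0∞` (equal to `⊤` unless `Q ≪ P`
and the log-likelihood ratio is `Q`-integrable). -/
def KL (Q P : Measure 𝒳) : ℝ≥0∞ :=
  if Q ≪ P ∧ Integrable (llr Q P) Q then ENNReal.ofReal (∫ x, llr Q P x ∂Q) else ⊤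

/-- `I(Q;Pcl) = inf_{P ∈ Pcl} KL(Q‖P)`. -/
def KLinf (Q : Measure 𝒳) (Pcl : Set (Measure 𝒳)) : ℝ≥0∞ := ⨅ P ∈ Pcl, KL Q P

/-- `E_μ[(T - k + 1)^+ ∣ T ≥ k]`. -/
def condDelay (μ : Measure (ℕ → 𝒳)) (T : (ℕ → 𝒳) → ℕ∞) (k : ℕ) : ℝ≥0∞ :=
  (∫⁻ ω in {ω | (k : ℕ∞) ≤ T ω}, ((T ω + 1 - (k : ℕ∞) : ℕ∞) : ℝ≥0∞) ∂μ)
    / μ {ω | (k : ℕ∞) ≤ T ω}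

/-- Pollak's conditional average detection delay
`C_Q(T) = sup_{P∈Pcl} sup_{k ≥ 1, ℙ^{(P)}_{k,Q}(T ≥ k) > 0} E^{(P)}_{k,Q}[(T-k+1)^+ ∣ T ≥ k]`. -/
def CADD (Pcl : Set (Measure 𝒳)) (Q : Measure 𝒳) (T : (ℕ → 𝒳) → ℕ∞) : ℝ≥0∞ :=
  ⨆ P ∈ Pcl, ⨆ k : ℕ, ⨆ _ : 1 ≤ k, ⨆ μ : Measure (ℕ → 𝒳),
    ⨆ _ : IsChange P Q k μ ∧ 0 < μ {ω | (k : ℕ∞) ≤ T ω}, condDelay μ T k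

/-!
On `F_n` the change-point law `ℙ^{(P)}_{k,Q}` has density `e^{L_{k:n}}` with respect to `P^∞`:
its `n`-dimensional marginal is a product of copies of `P` and of `Q = (dQ/dP) • P`, so it is
`P^{⊗n}` weighted by the product of the densities. Cutting `A ∩ {T ≥ k}` along the events
`{T = n}`, which lie in `F_n`, gives the numerator. The denominators agree because
`{T ≥ k} ∈ F_{k-1}`, where `e^{L_{k:k-1}} = 1`.
-/

section ProductMeasure

variable {ι : Type*} [Fintype ι] {α : ι → Type*} [∀ i, MeasurableSpace (α i)]

lemma lintegral_pi_prod_eq_prod (μ : ∀ i, Measure (α i)) [∀ i, IsProbabilityMeasure (μ i)]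
    {f : ∀ i, α i → ℝ≥0∞} (hf : ∀ i, Measurable (f i)) :
    ∫⁻ x, ∏ i, f i (x i) ∂Measure.pi μ = ∏ i, ∫⁻ y, f i y ∂μ i := by
  rw [ProbabilityTheory.lintegral_prod_eq_prod_lintegral_of_indepFun _ _
    (ProbabilityTheory.iIndepFun_pi fun i => (hf i).aemeasurable)
    fun i => (hf i).comp (measurable_pi_apply i)]
  exact Finset.prod_congr rfl fun i _ => (measurePreserving_eval μ i).lintegral_comp (hf i)

lemma Measure.pi_eq_withDensity_prod {ν μ : ∀ i, Measure (α i)} [∀ i, SigmaFinite (ν i)]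
    [∀ i, IsProbabilityMeasure (μ i)] {f : ∀ i, α i → ℝ≥0∞} (hf : ∀ i, Measurable (f i))
    (hν : ∀ i, ν i = (μ i).withDensity (f i)) :
    Measure.pi ν = (Measure.pi μ).withDensity fun x => ∏ i, f i (x i) := by
  refine Measure.pi_eq fun s hs => ?_
  have hind : (Set.pi univ s).indicator (fun x => ∏ i, f i (x i))
      = fun x => ∏ i, (s i).indicator (f i) (x i) := by
    ext x
    simp only [Set.indicator, Set.mem_univ_pi, Finset.prod_ite_zero, Finset.mem_univ, true_imp_iff]
  rw [withDensity_apply _ (.univ_pi hs), ← lintegral_indicator (.univ_pi hs), hind,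
    lintegral_pi_prod_eq_prod μ fun i => (hf i).indicator (hs i)]
  refine Finset.prod_congr rfl fun i _ => ?_
  rw [lintegral_indicator (hs i), hν i, withDensity_apply _ (hs i)]

end ProductMeasure

lemma Finset.prod_fin_ite_le_eq_prod_Icc {M : Type*} [CommMonoid M] (g : ℕ → M) {k : ℕ}
    (hk : 1 ≤ k) (n : ℕ) :
    ∏ i : Fin n, (if k ≤ (i : ℕ) + 1 then g i else 1) = ∏ i ∈ Finset.Icc k n, g (i - 1) := by
  have hfilter : (Finset.range n).filter (fun i => k ≤ i + 1) = Finset.Ico (k - 1) n := by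
    ext i; simp only [Finset.mem_filter, Finset.mem_range, Finset.mem_Ico]; omega
  have hshift := Finset.prod_Ico_add' (fun i => g (i - 1)) (k - 1) n 1
  rw [Nat.sub_add_cancel hk, Finset.Ico_add_one_right_eq_Icc] at hshift
  rw [Fin.prod_univ_eq_prod_range (fun i => if k ≤ i + 1 then g i else 1), ← Finset.prod_filter,
    hfilter, ← hshift]
  simp only [Nat.add_sub_cancel]

lemma natF_le (n : ℕ) : natF 𝒳 n ≤ (inferInstance : MeasurableSpace (ℕ → 𝒳)) :=
  (measurable_pi_lambda _ fun i : Fin n => measurable_pi_apply (i : ℕ)).comap_le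

/-- `e^{L_{k:n}}`, with `X_i ω = ω (i - 1)`. -/
def likelihoodRatio (P Q : Measure 𝒳) (k n : ℕ) (ω : ℕ → 𝒳) : ℝ≥0∞ :=
  ∏ i ∈ Finset.Icc k n, Q.rnDeriv P (ω (i - 1))

lemma likelihoodRatio_of_lt (P Q : Measure 𝒳) {k n : ℕ} (h : n < k) (ω : ℕ → 𝒳) :
    likelihoodRatio P Q k n ω = 1 := by
  simp [likelihoodRatio, Finset.Icc_eq_empty_of_lt h]

lemma IsChange.measure_eq_setLIntegral_likelihoodRatio {P Q : Measure 𝒳}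
    [IsProbabilityMeasure P] [IsProbabilityMeasure Q] (hQP : Q ≪ P) {k : ℕ} (hk : 1 ≤ k)
    {μk μinf : Measure (ℕ → 𝒳)} (hμk : IsChange P Q k μk) (hμinf : IsIID P μinf) {n : ℕ}
    {B : Set (ℕ → 𝒳)} (hB : MeasurableSet[natF 𝒳 n] B) :
    μk B = ∫⁻ ω in B, likelihoodRatio P Q k n ω ∂μinf := by
  obtain ⟨B', hB', rfl⟩ := hB
  have hπ : Measurable fun (ω : ℕ → 𝒳) (i : Fin n) => ω i :=
    measurable_pi_lambda _ fun i => measurable_pi_apply _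
  set f : Fin n → 𝒳 → ℝ≥0∞ := fun i x => if k ≤ (i : ℕ) + 1 then Q.rnDeriv P x else 1
  have hf : ∀ i, Measurable (f i) := fun i => by
    by_cases h : k ≤ (i : ℕ) + 1 <;> simp only [f, h, if_true, if_false]
    exacts [Q.measurable_rnDeriv P, measurable_const]
  have hmarginal : ∀ i : Fin n, (if (i : ℕ) + 1 < k then P else Q) = P.withDensity (f i) := by
    intro i
    by_cases h : k ≤ (i : ℕ) + 1
    · simp only [f, h, if_true, if_neg (not_lt.2 h), Measure.withDensity_rnDeriv_eq Q P hQP]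
    · simp only [f, h, if_false, if_pos (not_le.1 h)]
      exact withDensity_one.symm
  have hdensity : Measurable fun x : Fin n → 𝒳 => ∏ i, f i (x i) :=
    Finset.measurable_prod _ fun i _ => (hf i).comp (measurable_pi_apply i)
  have : ∀ i : Fin n, SigmaFinite (if (i : ℕ) + 1 < k then P else Q) := fun i => by
    split <;> infer_instance
  rw [← Measure.map_apply hπ hB', hμk.2, Measure.pi_eq_withDensity_prod hf hmarginal,
    withDensity_apply _ hB', ← hμinf.2, setLIntegral_map hB' hdensity hπ]
  exact setLIntegral_congr_fun (hπ hB') fun ω _ =>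
    Finset.prod_fin_ite_le_eq_prod_Icc (fun i => Q.rnDeriv P (ω i)) hk n

lemma IsStopping.measurableSet_le {T : (ℕ → 𝒳) → ℕ∞} (hT : IsStopping 𝒳 T) {k : ℕ}
    (hk : 1 ≤ k) : MeasurableSet[natF 𝒳 (k - 1)] {ω | (k : ℕ∞) ≤ T ω} := by
  have hset : {ω | (k : ℕ∞) ≤ T ω} = {ω | T ω ≤ ((k - 1 : ℕ) : ℕ∞)}ᶜ := by
    ext ω
    rw [mem_ofPred_eq, mem_compl_iff, mem_ofPred_eq, not_le,
      ← ENat.add_one_le_iff (ENat.natCast_ne_top _)]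
    norm_cast
    rw [Nat.sub_add_cancel hk]
  rw [hset]
  exact (hT (k - 1)).compl

section StoppedSets

variable {Ω : Type*} {F : ℕ → MeasurableSpace Ω} {T : Ω → ℕ∞} {A : Set Ω}

lemma measure_eq_setLIntegral_of_stopped [MeasurableSpace Ω]
    (hF : ∀ n, F n ≤ ‹MeasurableSpace Ω›) {μ ν : Measure Ω} {D : ℕ → Ω → ℝ≥0∞}
    (hD : ∀ n B, MeasurableSet[F n] B → μ B = ∫⁻ ω in B, D n ω ∂ν)
    (hA : ∀ n : ℕ, MeasurableSet[F n] (A ∩ {ω | T ω = n})) (hAfin : A ⊆ {ω | T ω < ⊤}) :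
    μ A = ∫⁻ ω in A, D (T ω).toNat ω ∂ν := by
  set S : ℕ → Set Ω := fun n => A ∩ {ω | T ω = n}
  have hSm : ∀ n, MeasurableSet (S n) := fun n => hF n _ (hA n)
  have hSd : Pairwise (Function.onFun Disjoint S) := fun m n hmn =>
    Set.disjoint_left.2 fun ω hm hn => hmn (by exact_mod_cast hm.2.symm.trans hn.2)
  have hSU : ⋃ n, S n = A := by
    refine (iUnion_subset fun n => inter_subset_left).antisymm fun ω hω => ?_
    exact mem_iUnion.2 ⟨(T ω).toNat, hω, (ENat.natCast_toNat (hAfin hω).ne).symm⟩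
  rw [← hSU, measure_iUnion hSd hSm, lintegral_iUnion hSm hSd]
  refine tsum_congr fun n => (hD n _ (hA n)).trans (setLIntegral_congr_fun (hSm n) ?_)
  intro ω ⟨_, hTn⟩
  simp only [mem_ofPred_eq.mp hTn, ENat.toNat_natCast]

lemma measurableSet_inter_setOf_le_inter_setOf_eq
    (hA : ∀ n : ℕ, MeasurableSet[F n] (A ∩ {ω | T ω = n})) (k n : ℕ) :
    MeasurableSet[F n] (A ∩ {ω | (k : ℕ∞) ≤ T ω} ∩ {ω | T ω = n}) := by
  by_cases hkn : k ≤ n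
  · convert hA n using 1
    ext ω
    simp +contextual [hkn]
  · convert @MeasurableSet.empty _ (F n)
    refine eq_empty_of_forall_notMem fun ω ⟨⟨_, (hkT : (k : ℕ∞) ≤ T ω)⟩, (hTn : T ω = n)⟩ => ?_
    exact hkn (by rwa [hTn, Nat.cast_le] at hkT)

end StoppedSets

theorem conditional_change_of_measure_at_stopping_time_general
    (P Q : Measure 𝒳) (hP : IsProbabilityMeasure P) (hQ : IsProbabilityMeasure Q)
    (hQP : Q ≪ P) (k : ℕ) (hk : 1 ≤ k)
    (μk : Measure (ℕ → 𝒳)) (hμk : IsChange P Q k μk)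
    (μinf : Measure (ℕ → 𝒳)) (hμinf : IsIID P μinf)
    (T : (ℕ → 𝒳) → ℕ∞) (hT : IsStopping 𝒳 T)
    (A : Set (ℕ → 𝒳))
    (hAstopped : ∀ n : ℕ, MeasurableSet[natF 𝒳 n] (A ∩ {ω | T ω = (n : ℕ∞)}))
    (hAfin : A ⊆ {ω | T ω < ⊤}) :
    μk (A ∩ {ω | (k : ℕ∞) ≤ T ω}) / μk {ω | (k : ℕ∞) ≤ T ω} =
      (∫⁻ ω in A ∩ {ω | (k : ℕ∞) ≤ T ω},
          ∏ i ∈ Finset.Icc k (T ω).toNat, Q.rnDeriv P (ω (i - 1)) ∂μinf)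
        / μinf {ω | (k : ℕ∞) ≤ T ω} := by
  have hdensity : ∀ n B, MeasurableSet[natF 𝒳 n] B →
      μk B = ∫⁻ ω in B, likelihoodRatio P Q k n ω ∂μinf := fun n B hB =>
    hμk.measure_eq_setLIntegral_likelihoodRatio hQP hk hμinf hB
  have hnum : μk (A ∩ {ω | (k : ℕ∞) ≤ T ω}) =
      ∫⁻ ω in A ∩ {ω | (k : ℕ∞) ≤ T ω}, likelihoodRatio P Q k (T ω).toNat ω ∂μinf :=
    measure_eq_setLIntegral_of_stopped natF_le hdensity
      (measurableSet_inter_setOf_le_inter_setOf_eq hAstopped k)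
      (inter_subset_left.trans hAfin)
  have hden : μk {ω | (k : ℕ∞) ≤ T ω} = μinf {ω | (k : ℕ∞) ≤ T ω} := by
    rw [hdensity _ _ (hT.measurableSet_le hk)]
    simp only [likelihoodRatio_of_lt P Q (Nat.sub_lt hk one_pos), setLIntegral_one]
  rw [hnum, hden]
  rfl

/-- **Lemma 2.4, third claim (conditional change of measure at a stopping time).** For
`A ∈ F_T` with `A ⊆ {T < ∞}` and `P^∞(T ≥ k) > 0`,
`ℙ^{(P)}_{k,Q}(A ∣ T ≥ k) = E_{P^∞}[e^{L_{k,T}} 1_A ∣ T ≥ k]`, where on `{T = n}` we have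
`e^{L_{k,T}} = ∏_{i=k}^{n} (dQ/dP)(X_i)` and `X_i ω = ω (i-1)`. -/
theorem conditional_change_of_measure_at_stopping_time
    (P Q : Measure 𝒳) (hP : IsProbabilityMeasure P) (hQ : IsProbabilityMeasure Q)
    (hQP : Q ≪ P) (k : ℕ) (hk : 1 ≤ k)
    (μk : Measure (ℕ → 𝒳)) (hμk : IsChange P Q k μk)
    (μinf : Measure (ℕ → 𝒳)) (hμinf : IsIID P μinf)
    (T : (ℕ → 𝒳) → ℕ∞) (hT : IsStopping 𝒳 T)
    (hpos : 0 < μinf {ω | (k : ℕ∞) ≤ T ω})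
    (A : Set (ℕ → 𝒳))
    (hAstopped : ∀ n : ℕ, MeasurableSet[natF 𝒳 n] (A ∩ {ω | T ω = (n : ℕ∞)}))
    (hAfin : A ⊆ {ω | T ω < ⊤}) :
    μk (A ∩ {ω | (k : ℕ∞) ≤ T ω}) / μk {ω | (k : ℕ∞) ≤ T ω} =
      (∫⁻ ω in A ∩ {ω | (k : ℕ∞) ≤ T ω},
          ∏ i ∈ Finset.Icc k (T ω).toNat, Q.rnDeriv P (ω (i - 1)) ∂μinf)
        / μinf {ω | (k : ℕ∞) ≤ T ω} :=
  conditional_change_of_measure_at_stopping_time_general P Q hP hQ hQP k hk μk hμk μinf hμinf T hT A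
    hAstopped hAfin
end
end

section
/- ARL block selection (Lemma 2.6): Let P be a probability measure on 𝒳, let T be a stopping time with respect to (F_n) with E_{P^∞}[T] ≥ γ for some γ > 0, and let f be a positive integer. Partition ℕ into the disjoint blocks C_r := {(r−1)f+1, …, rf} for r ≥ 1, and set x_r := P^∞(T ∈ C_r) and y_r := P^∞(T ≥ (r−1)f+1). Then Σ_{r≥1} y_r ≥ E_{P^∞}[T]/f ≥ γ/f; if moreover T < ∞ P^∞-almost surely then Σ_{r≥1} x_r = 1; and in all cases there exists r⋆ with y_{r⋆} > 0 and x_{r⋆}/y_{r⋆} ≤ f/γ, equivalently there exists k⋆ := (r⋆−1)f+1 with P^∞(k⋆ ≤ T ≤ k⋆+f−1 | T ≥ k⋆) ≤ f/γ. -/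
open MeasureTheory Filter Set
open scoped ENNReal NNReal Classical

noncomputable section

variable {𝒳 : Type*} [MeasurableSpace 𝒳]

/-! Covering `[1, ∞)` by blocks of length `f` and comparing `T` with the number of blocks it
reaches gives `E[T] ≤ f Σ_r P(T ≥ (r-1)f+1)`, while the events `{T ∈ C_r}` partition `{T < ∞}`
(`T` cannot vanish anywhere: `{T ≤ 0}` lies in the trivial σ-algebra `F_0`, and `E[T] > 0`), so
`Σ_r x_r ≤ 1 ≤ (f/γ) Σ_r y_r`. If every ratio `x_r / y_r` exceeded `f/γ`, summing `f/γ · y_r < x_r`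
would contradict this. -/

/-- The block `C_{r+1} = {rf+1, …, (r+1)f}`. -/
def block (f r : ℕ) : Set ℕ∞ := Icc ((r * f + 1 : ℕ) : ℕ∞) (((r + 1) * f : ℕ) : ℕ∞)

theorem pairwise_disjoint_block (f : ℕ) : Pairwise (Function.onFun Disjoint (block f)) := by
  refine (pairwise_disjoint_on _).mpr fun r s hrs => ?_
  refine Set.disjoint_left.mpr fun n ⟨_, hn_le⟩ ⟨hn_ge, _⟩ => ?_
  have : s * f + 1 ≤ (r + 1) * f := by exact_mod_cast hn_ge.trans hn_le
  nlinarith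

theorem natCast_mem_block_div (f : ℕ) (hf : 0 < f) {m : ℕ} (hm : 0 < m) :
    (m : ℕ∞) ∈ block f ((m - 1) / f) := by
  have hlow := Nat.div_mul_le_self (m - 1) f
  have hupp := Nat.lt_div_mul_add (a := m - 1) hf
  constructor <;> norm_cast
  · omega
  · rw [add_mul, one_mul]; omega

theorem iUnion_block (f : ℕ) (hf : 0 < f) : ⋃ r, block f r = Ioo 0 ⊤ := by
  ext n
  cases n with
  | top => simp only [mem_iUnion, block, mem_Icc, top_le_iff, ENat.natCast_ne_top, and_false,
      exists_false, mem_Ioo, lt_self_iff_false]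
  | coe m =>
    simp only [mem_iUnion, mem_Ioo, ENat.natCast_lt_top, and_true, Nat.cast_pos]
    refine ⟨fun ⟨r, hr, _⟩ => ?_, fun hm => ⟨_, natCast_mem_block_div f hf hm⟩⟩
    have : r * f + 1 ≤ m := by exact_mod_cast hr
    omega

theorem coe_le_mul_tsum_indicator (f : ℕ) (hf : 0 < f) (n : ℕ∞) :
    (n : ℝ≥0∞) ≤ f * ∑' r : ℕ, (Ici ((r * f + 1 : ℕ) : ℕ∞)).indicator 1 n := by
  cases n with
  | top =>
    have hf0 : (f : ℝ≥0∞) ≠ 0 := by exact_mod_cast hf.ne'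
    simp [hf0]
  | coe m =>
    rcases Nat.eq_zero_or_pos m with rfl | hm
    · simp
    obtain ⟨hlow, hupp⟩ := natCast_mem_block_div f hf hm
    set q := (m - 1) / f
    have hreach : ∀ r ∈ Finset.range (q + 1), (m : ℕ∞) ∈ Ici ((r * f + 1 : ℕ) : ℕ∞) := by
      intro r hr
      refine le_trans ?_ hlow
      gcongr
      exact Nat.lt_succ_iff.mp (Finset.mem_range.mp hr)
    calc ((m : ℕ∞) : ℝ≥0∞) ≤ ((q + 1) * f : ℕ) := by exact_mod_cast hupp
      _ = f * ∑ r ∈ Finset.range (q + 1), (Ici ((r * f + 1 : ℕ) : ℕ∞)).indicator 1 (m : ℕ∞) := by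
        rw [Finset.sum_congr rfl fun r hr => indicator_of_mem (hreach r hr) _]
        simp [mul_comm]
      _ ≤ _ := by gcongr; exact ENNReal.sum_le_tsum _

section Blocks

variable {Ω : Type*} [MeasurableSpace Ω] (μ : Measure Ω) {T : Ω → ℕ∞}

theorem lintegral_le_mul_tsum_measure_ge (hT : Measurable T) (f : ℕ) (hf : 0 < f) :
    ∫⁻ ω, (T ω : ℝ≥0∞) ∂μ ≤ f * ∑' r : ℕ, μ {ω | ((r * f + 1 : ℕ) : ℕ∞) ≤ T ω} := by
  have hmeas (r : ℕ) : MeasurableSet {ω | ((r * f + 1 : ℕ) : ℕ∞) ≤ T ω} :=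
    hT (.of_discrete : MeasurableSet (Ici ((r * f + 1 : ℕ) : ℕ∞)))
  calc ∫⁻ ω, (T ω : ℝ≥0∞) ∂μ
      ≤ ∫⁻ ω, f * ∑' r : ℕ, {ω | ((r * f + 1 : ℕ) : ℕ∞) ≤ T ω}.indicator 1 ω ∂μ :=
        lintegral_mono fun ω => coe_le_mul_tsum_indicator f hf (T ω)
    _ = f * ∑' r : ℕ, μ {ω | ((r * f + 1 : ℕ) : ℕ∞) ≤ T ω} := by
        rw [lintegral_const_mul' _ _ (ENNReal.natCast_ne_top f),
          lintegral_tsum fun r => (measurable_one.indicator (hmeas r)).aemeasurable]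
        simp only [lintegral_indicator_one (hmeas _)]

theorem tsum_measure_preimage_block (hT : Measurable T) (f : ℕ) (hf : 0 < f) :
    ∑' r, μ (T ⁻¹' block f r) = μ (T ⁻¹' Ioo 0 ⊤) := by
  rw [← measure_iUnion (fun r s hrs => (pairwise_disjoint_block f hrs).preimage T)
    fun r => hT .of_discrete, ← preimage_iUnion, iUnion_block f hf]

end Blocks

theorem IsStopping.measurable {T : (ℕ → 𝒳) → ℕ∞} (hT : IsStopping 𝒳 T) : Measurable T := by
  have hle (n : ℕ) : MeasurableSet {ω | T ω ≤ n} :=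
    (measurable_pi_lambda _ fun i => measurable_pi_apply _).comap_le _ (hT n)
  refine ENat.measurable_iff.mpr fun n => ?_
  cases n with
  | zero => simpa [Set.preimage, le_zero_iff] using hle 0
  | succ m =>
    convert (hle (m + 1)).diff (hle m) using 1
    ext ω
    simp only [mem_preimage, mem_singleton_iff, Set.mem_sdiff, mem_ofPred_eq, not_le]
    generalize T ω = t
    cases t with
    | top => simpa using (ENat.natCast_ne_top (m + 1)).symm
    | coe t => norm_cast; omega

theorem natF_zero : natF 𝒳 0 = ⊥ := by
  have : (fun (ω : ℕ → 𝒳) (i : Fin 0) => ω i) = fun _ => Fin.elim0 := by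
    funext ω i; exact i.elim0
  rw [natF, this, MeasurableSpace.comap_const]

theorem IsStopping.eq_zero_or_pos {T : (ℕ → 𝒳) → ℕ∞} (hT : IsStopping 𝒳 T) :
    T = 0 ∨ ∀ ω, 0 < T ω := by
  have h0 := hT 0
  rw [natF_zero, MeasurableSpace.measurableSet_bot_iff] at h0
  simp only [Nat.cast_zero, nonpos_iff_eq_zero, Set.eq_empty_iff_forall_notMem,
    Set.eq_univ_iff_forall, mem_ofPred_eq] at h0
  rcases h0 with h0 | h0
  · exact .inr fun ω => pos_iff_ne_zero.mpr (h0 ω)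
  · exact .inl (funext h0)

theorem IsStopping.pos_of_lintegral_ne_zero {T : (ℕ → 𝒳) → ℕ∞} (hT : IsStopping 𝒳 T)
    {μ : Measure (ℕ → 𝒳)} (h : ∫⁻ ω, (T ω : ℝ≥0∞) ∂μ ≠ 0) (ω : ℕ → 𝒳) : 0 < T ω :=
  hT.eq_zero_or_pos.resolve_left (fun hT0 => h (by simp [hT0])) ω

theorem exists_div_le_of_tsum_le_mul_tsum {ι : Type*} {x y : ι → ℝ≥0∞} {c : ℝ≥0∞}
    (hx : ∑' r, x r ≠ ⊤) (hy : ∀ r, y r ≠ ⊤) (hy0 : ∑' r, y r ≠ 0)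
    (h : ∑' r, x r ≤ c * ∑' r, y r) : ∃ r, 0 < y r ∧ x r / y r ≤ c := by
  by_contra! hbad
  obtain ⟨r₀, hr₀⟩ : ∃ r, y r ≠ 0 := by simpa [ENNReal.tsum_eq_zero] using hy0
  have hmul_lt {r} (hr : y r ≠ 0) : c * y r < x r := by
    simpa [ENNReal.div_mul_cancel hr (hy r)] using
      ENNReal.mul_lt_mul_left hr (hy r) (hbad r (pos_iff_ne_zero.mpr hr))
  have hmul_le (r) : c * y r ≤ x r := by
    by_cases hr : y r = 0
    · simp [hr]
    · exact (hmul_lt hr).le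
  have := ENNReal.tsum_lt_tsum (ne_top_of_le_ne_top hx (ENNReal.tsum_le_tsum hmul_le))
    hmul_le (hmul_lt hr₀)
  rw [ENNReal.tsum_mul_left] at this
  exact (this.trans_le h).false

theorem ARL_block_selection_general
    (P : Measure 𝒳)
    (μinf : Measure (ℕ → 𝒳)) (hμinf : IsIID P μinf)
    (T : (ℕ → 𝒳) → ℕ∞) (hT : IsStopping 𝒳 T)
    (γ : ℝ) (hγ : 0 < γ)
    (hARL : ENNReal.ofReal γ ≤ ∫⁻ ω, (T ω : ℝ≥0∞) ∂μinf)
    (f : ℕ) (hf : 0 < f) :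
    let x : ℕ → ℝ≥0∞ := fun r =>
      μinf {ω | (((r - 1) * f + 1 : ℕ) : ℕ∞) ≤ T ω ∧ T ω ≤ ((r * f : ℕ) : ℕ∞)}
    let y : ℕ → ℝ≥0∞ := fun r => μinf {ω | (((r - 1) * f + 1 : ℕ) : ℕ∞) ≤ T ω}
    (ENNReal.ofReal γ / (f : ℝ≥0∞) ≤ (∫⁻ ω, (T ω : ℝ≥0∞) ∂μinf) / (f : ℝ≥0∞) ∧
        (∫⁻ ω, (T ω : ℝ≥0∞) ∂μinf) / (f : ℝ≥0∞) ≤ ∑' r : ℕ, y (r + 1)) ∧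
      (μinf {ω | T ω = ⊤} = 0 → ∑' r : ℕ, x (r + 1) = 1) ∧
      ∃ r : ℕ, 1 ≤ r ∧ 0 < y r ∧ x r / y r ≤ (f : ℝ≥0∞) / ENNReal.ofReal γ := by
  intro x y
  have : IsProbabilityMeasure μinf := hμinf.1
  have hTm := hT.measurable
  have hγ0 : ENNReal.ofReal γ ≠ 0 := (ENNReal.ofReal_pos.mpr hγ).ne'
  have hf0 : (f : ℝ≥0∞) ≠ 0 := by exact_mod_cast hf.ne'
  have hpos := hT.pos_of_lintegral_ne_zero (ne_bot_of_le_ne_bot hγ0 hARL)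
  have hsum_y : (∫⁻ ω, (T ω : ℝ≥0∞) ∂μinf) / f ≤ ∑' r, y (r + 1) := by
    rw [ENNReal.div_le_iff hf0 (ENNReal.natCast_ne_top f), mul_comm]
    exact lintegral_le_mul_tsum_measure_ge μinf hTm f hf
  have hsum_x : ∑' r, x (r + 1) = μinf (T ⁻¹' {⊤})ᶜ := by
    have : T ⁻¹' Ioo 0 ⊤ = (T ⁻¹' {⊤})ᶜ := by ext ω; simp [hpos ω, lt_top_iff_ne_top]
    exact this ▸ tsum_measure_preimage_block μinf hTm f hf
  have hγf0 : ENNReal.ofReal γ / f ≠ 0 := ENNReal.div_ne_zero.mpr ⟨hγ0, ENNReal.natCast_ne_top f⟩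
  have hγf_top : ENNReal.ofReal γ / f ≠ ⊤ := ENNReal.div_ne_top ENNReal.ofReal_ne_top hf0
  have hγy := (ENNReal.div_le_div_right hARL _).trans hsum_y
  have hxy : ∑' r, x (r + 1) ≤ f / ENNReal.ofReal γ * ∑' r, y (r + 1) := calc
    ∑' r, x (r + 1) ≤ 1 := hsum_x ▸ prob_le_one
    _ = (ENNReal.ofReal γ / f)⁻¹ * (ENNReal.ofReal γ / f) :=
      (ENNReal.inv_mul_cancel hγf0 hγf_top).symm
    _ ≤ f / ENNReal.ofReal γ * ∑' r, y (r + 1) := by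
      rw [ENNReal.inv_div (.inl (ENNReal.natCast_ne_top f)) (.inl hf0)]; gcongr
  refine ⟨⟨ENNReal.div_le_div_right hARL _, hsum_y⟩,
    fun hfin => hsum_x ▸ (prob_compl_eq_one_iff (hTm (measurableSet_singleton ⊤))).mpr hfin, ?_⟩
  obtain ⟨r, hr⟩ := exists_div_le_of_tsum_le_mul_tsum (hsum_x ▸ measure_ne_top _ _)
    (fun r => measure_ne_top μinf _) (ne_bot_of_le_ne_bot hγf0 hγy) hxy
  exact ⟨r + 1, r.succ_pos, hr⟩

/-- **Lemma 2.6 (ARL block selection).** With blocks `C_r = {(r-1)f+1, …, rf}`,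
`x_r = P^∞(T ∈ C_r)`, `y_r = P^∞(T ≥ (r-1)f+1)`: `Σ_{r≥1} y_r ≥ E[T]/f ≥ γ/f`; if `T < ∞`
a.s. then `Σ_{r≥1} x_r = 1`; and there is `r⋆ ≥ 1` with `y_{r⋆} > 0` and
`x_{r⋆}/y_{r⋆} ≤ f/γ`, i.e. for `k⋆ = (r⋆-1)f+1`,
`P^∞(k⋆ ≤ T ≤ k⋆+f-1 ∣ T ≥ k⋆) ≤ f/γ`. -/
theorem ARL_block_selection
    (P : Measure 𝒳) (hP : IsProbabilityMeasure P)
    (μinf : Measure (ℕ → 𝒳)) (hμinf : IsIID P μinf)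
    (T : (ℕ → 𝒳) → ℕ∞) (hT : IsStopping 𝒳 T)
    (γ : ℝ) (hγ : 0 < γ)
    (hARL : ENNReal.ofReal γ ≤ ∫⁻ ω, (T ω : ℝ≥0∞) ∂μinf)
    (f : ℕ) (hf : 0 < f) :
    let x : ℕ → ℝ≥0∞ := fun r =>
      μinf {ω | (((r - 1) * f + 1 : ℕ) : ℕ∞) ≤ T ω ∧ T ω ≤ ((r * f : ℕ) : ℕ∞)}
    let y : ℕ → ℝ≥0∞ := fun r => μinf {ω | (((r - 1) * f + 1 : ℕ) : ℕ∞) ≤ T ω}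
    (ENNReal.ofReal γ / (f : ℝ≥0∞) ≤ (∫⁻ ω, (T ω : ℝ≥0∞) ∂μinf) / (f : ℝ≥0∞) ∧
        (∫⁻ ω, (T ω : ℝ≥0∞) ∂μinf) / (f : ℝ≥0∞) ≤ ∑' r : ℕ, y (r + 1)) ∧
      (μinf {ω | T ω = ⊤} = 0 → ∑' r : ℕ, x (r + 1) = 1) ∧
      ∃ r : ℕ, 1 ≤ r ∧ 0 < y r ∧ x r / y r ≤ (f : ℝ≥0∞) / ENNReal.ofReal γ :=
  ARL_block_selection_general P μinf hμinf T hT γ hγ hARL f hf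
end
end

section
/- ARL calibration of the bounded-mean e-detector (Theorem 3.1, part 1): For every γ > 0 and every probability measure P on [0,1] with mean E_P[X] ≤ m, the stopping time T_γ^{BM} satisfies E_{P^∞}[T_γ^{BM}] ≥ γ (where the expectation equals +∞ if T_γ^{BM} = ∞ with positive probability). Consequently inf_{P∈𝒫_m} E_{P^∞}[T_γ^{BM}] ≥ γ. -/
open MeasureTheory Filter Set
open scoped ENNReal NNReal Classical

noncomputable section

variable {𝒳 : Type*} [MeasurableSpace 𝒳]

/-! ### The bounded-mean detection setting: `𝒳 = [0,1] ⊆ ℝ`, baseline mean `m ∈ (0,1)` -/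

/-- The pre-change class `𝒫_m`: probability measures on `[0,1]` with mean `≤ m`. -/
def PclassBM (m : ℝ) : Set (Measure ℝ) :=
  {P | IsProbabilityMeasure P ∧ P (Set.Icc (0 : ℝ) 1)ᶜ = 0 ∧ ∫ x, x ∂P ≤ m}

/-- The post-change class `𝒬_c`: probability measures on `[0,1]` with mean `> c`. -/
def QclassBM (c : ℝ) : Set (Measure ℝ) :=
  {Q | IsProbabilityMeasure Q ∧ Q (Set.Icc (0 : ℝ) 1)ᶜ = 0 ∧ c < ∫ x, x ∂Q}

/-- `KL_inf(Q; m) = inf_{P ∈ 𝒫_m} KL(Q‖P)`. -/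
def KLinfBM (Q : Measure ℝ) (m : ℝ) : ℝ≥0∞ := KLinf Q (PclassBM m)

/-- The betting factor `L_λ(x) = 1 + λ(x/m − 1)`. -/
def Lfun (m lam x : ℝ) : ℝ := 1 + lam * (x / m - 1)

/-- The Shiryaev–Roberts statistic `R_n^{(λ)} = Σ_{k=1}^n ∏_{i=k}^n L_λ(X_i)` (with
`X_i ω = ω (i-1)`, so `R_n^{(λ)} = Σ_{k<n} ∏_{k ≤ i < n} L_λ(ω i)`), and `R_0^{(λ)} = 0`. -/
def SR (m lam : ℝ) (n : ℕ) (ω : ℕ → ℝ) : ℝ :=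
  ∑ k ∈ Finset.range n, ∏ i ∈ Finset.Ico k n, Lfun m lam (ω i)

/-- The mixture statistic `M_n = Σ_{λ∈Λ} w_λ R_n^{(λ)}`. -/
def mixSR (m : ℝ) (Lam : Set ℝ) (w : ℝ → ℝ) (n : ℕ) (ω : ℕ → ℝ) : ℝ :=
  ∑' lam : Lam, w lam * SR m lam n ω

/-- The bounded-mean detector `T_γ^{BM} = inf{n ≥ 1 : M_n ≥ γ}` (`= ∞` if no such `n`). -/
def TBM (m : ℝ) (Lam : Set ℝ) (w : ℝ → ℝ) (γ : ℝ) (ω : ℕ → ℝ) : ℕ∞ :=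
  ⨅ n ∈ {n : ℕ | 1 ≤ n ∧ γ ≤ mixSR m Lam w n ω}, (n : ℕ∞)


/-!
Since `E_P[X] ≤ m`, every betting factor has `E_P[L_λ(X)] ≤ 1`, so the recursion
`R_{n+1} = (R_n + 1) L_λ(X_{n+1})` makes `M_n - n` a supermartingale under `P^∞`. Optional
stopping at `T ∧ N` gives `γ P(T ≤ N) ≤ E[M_{T∧N}] ≤ E[T ∧ N] ≤ E[T]`; letting `N → ∞` yields
`γ ≤ E[T]`, unless `T = ∞` with positive probability, in which case `E[T] = ∞` anyway.
The statistics are carried in `ℝ≥0∞`, where the mixture over `Λ` commutes with integration.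
-/
def survivalSet {Ω : Type*} (Z : ℕ → Ω → ℝ≥0∞) (c : ℝ≥0∞) (n : ℕ) : Set Ω :=
  {ω | ∀ k ≤ n, Z k ω < c}

section Survival

variable {Ω : Type*} {Z : ℕ → Ω → ℝ≥0∞} {c : ℝ≥0∞}

lemma survivalSet_antitone : Antitone (survivalSet Z c) :=
  fun _ _ hnm _ hω k hk => hω k (hk.trans hnm)

lemma measurableSet_survivalSet {mΩ : MeasurableSpace Ω} {n : ℕ}
    (hZ : ∀ k ≤ n, Measurable (Z k)) : MeasurableSet (survivalSet Z c n) := by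
  simp only [survivalSet, Set.ofPred_forall]
  exact .iInter fun k => .iInter fun hk => measurableSet_lt (hZ k hk) measurable_const

variable [MeasurableSpace Ω] {μ : Measure Ω}

/-- Optional stopping for the supermartingale `Z n - n`, stopped on leaving the survival set. -/
lemma mul_measure_compl_survivalSet_add_setLIntegral_le (hZ : ∀ n, Measurable (Z n))
    (hZ0 : Z 0 = 0)
    (hstep : ∀ N, ∫⁻ ω in survivalSet Z c N, Z (N + 1) ω ∂μ ≤
      ∫⁻ ω in survivalSet Z c N, Z N ω ∂μ + μ (survivalSet Z c N)) (N : ℕ) :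
    c * μ (survivalSet Z c N)ᶜ + ∫⁻ ω in survivalSet Z c N, Z N ω ∂μ ≤
      ∑ n ∈ Finset.range N, μ (survivalSet Z c n) := by
  set A := survivalSet Z c
  have hA : ∀ n, MeasurableSet (A n) := fun n => measurableSet_survivalSet fun k _ => hZ k
  induction N with
  | zero =>
    rcases eq_zero_or_pos c with rfl | hc
    · simp [hZ0]
    · have hA0 : A 0 = univ := by ext ω; simp [A, survivalSet, hZ0, hc]
      simp [hA0, hZ0]
  | succ N ih =>
    have hsub : A (N + 1) ⊆ A N := survivalSet_antitone N.le_succ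
    have hexit : c * μ (A N \ A (N + 1)) ≤ ∫⁻ ω in A N \ A (N + 1), Z (N + 1) ω ∂μ := by
      rw [← setLIntegral_const]
      refine setLIntegral_mono (hZ _) fun ω hω => ?_
      by_contra! h
      exact hω.2 fun k hk => (Nat.le_succ_iff.1 hk).elim (hω.1 k) (· ▸ h)
    have hcompl : (A (N + 1))ᶜ = (A N)ᶜ ∪ (A N \ A (N + 1)) := by
      ext ω; have := @hsub ω; simp only [mem_compl_iff, mem_union, Set.mem_sdiff]; tauto
    have hsplit : ∫⁻ ω in A N, Z (N + 1) ω ∂μ =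
        ∫⁻ ω in A N \ A (N + 1), Z (N + 1) ω ∂μ + ∫⁻ ω in A (N + 1), Z (N + 1) ω ∂μ := by
      rw [← lintegral_union (hA _) disjoint_sdiff_left, sdiff_union_of_subset hsub]
    calc c * μ (A (N + 1))ᶜ + ∫⁻ ω in A (N + 1), Z (N + 1) ω ∂μ
        = c * μ (A N)ᶜ + (c * μ (A N \ A (N + 1)) + ∫⁻ ω in A (N + 1), Z (N + 1) ω ∂μ) := by
          rw [hcompl, measure_union (disjoint_compl_left_iff_subset.mpr sdiff_subset)
            ((hA N).diff (hA _)), mul_add, add_assoc]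
      _ ≤ c * μ (A N)ᶜ + ∫⁻ ω in A N, Z (N + 1) ω ∂μ := by rw [hsplit]; gcongr
      _ ≤ c * μ (A N)ᶜ + (∫⁻ ω in A N, Z N ω ∂μ + μ (A N)) := by gcongr; exact hstep N
      _ ≤ ∑ n ∈ Finset.range (N + 1), μ (A n) := by
          rw [Finset.sum_range_succ, ← add_assoc]; gcongr

lemma sum_measure_le_lintegral {A : ℕ → Set Ω} (hA : ∀ n, MeasurableSet (A n)) {T : Ω → ℕ∞}
    (hT : ∀ᵐ ω ∂μ, ∀ n, ω ∈ A n → (n : ℕ∞) < T ω) (N : ℕ) :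
    ∑ n ∈ Finset.range N, μ (A n) ≤ ∫⁻ ω, (T ω : ℝ≥0∞) ∂μ := by
  have hpt : ∀ᵐ ω ∂μ, ∑ n ∈ Finset.range N, (A n).indicator 1 ω ≤ (T ω : ℝ≥0∞) := by
    filter_upwards [hT] with ω hω
    calc ∑ n ∈ Finset.range N, (A n).indicator 1 ω
        ≤ ∑ n ∈ Finset.range N, if (n : ℕ∞) < T ω then (1 : ℝ≥0∞) else 0 :=
          Finset.sum_le_sum fun n _ => by by_cases h : ω ∈ A n <;> simp [h, hω n]
      _ = (((Finset.range N).filter fun n : ℕ => (n : ℕ∞) < T ω).card : ℝ≥0∞) :=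
          Finset.sum_boole _ _
      _ ≤ T ω := by
          generalize T ω = t
          induction t using ENat.recTopCoe with
          | top => simp
          | coe t =>
            have hsub : (Finset.range N).filter (fun n : ℕ => (n : ℕ∞) < t) ⊆ Finset.range t :=
              fun n hn => by simpa using (Finset.mem_filter.1 hn).2
            simpa using Finset.card_le_card hsub
  calc ∑ n ∈ Finset.range N, μ (A n)
      = ∫⁻ ω, ∑ n ∈ Finset.range N, (A n).indicator 1 ω ∂μ := by
        rw [lintegral_finsetSum _ fun n _ => measurable_one.indicator (hA n)]
        simp_rw [lintegral_indicator_one (hA _)]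
    _ ≤ ∫⁻ ω, (T ω : ℝ≥0∞) ∂μ := lintegral_mono_ae hpt

theorem le_lintegral_of_survivalSet [IsProbabilityMeasure μ] (hZ : ∀ n, Measurable (Z n))
    (hZ0 : Z 0 = 0)
    (hstep : ∀ N, ∫⁻ ω in survivalSet Z c N, Z (N + 1) ω ∂μ ≤
      ∫⁻ ω in survivalSet Z c N, Z N ω ∂μ + μ (survivalSet Z c N))
    {T : Ω → ℕ∞} (hT : ∀ᵐ ω ∂μ, ∀ n, ω ∈ survivalSet Z c n → (n : ℕ∞) < T ω) :
    c ≤ ∫⁻ ω, (T ω : ℝ≥0∞) ∂μ := by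
  set A := survivalSet Z c
  have hA : ∀ n, MeasurableSet (A n) := fun n => measurableSet_survivalSet fun k _ => hZ k
  have hlim : c * μ (⋂ n, A n)ᶜ ≤ ∫⁻ ω, (T ω : ℝ≥0∞) ∂μ := by
    have hmono : Monotone fun n => (A n)ᶜ := fun _ _ h => compl_subset_compl.mpr
      (survivalSet_antitone h)
    rw [compl_iInter, hmono.measure_iUnion, ENNReal.mul_iSup]
    exact iSup_le fun N => le_self_add.trans <|
      (mul_measure_compl_survivalSet_add_setLIntegral_le hZ hZ0 hstep N).trans
      (sum_measure_le_lintegral hA hT N)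
  by_cases h0 : μ (⋂ n, A n) = 0
  · rwa [prob_compl_eq_one_sub (.iInter hA), h0, tsub_zero, mul_one] at hlim
  · have hTtop : ∀ᵐ ω ∂μ.restrict (⋂ n, A n), (⊤ : ℝ≥0∞) ≤ T ω := by
      refine (ae_restrict_iff' (.iInter hA)).mpr (hT.mono fun ω hω hmem => ?_)
      rw [ENat.eq_top_iff_forall_gt.mpr fun n => hω n (mem_iInter.1 hmem n)]
      simp
    calc c ≤ ⊤ * μ (⋂ n, A n) := by rw [ENNReal.top_mul h0]; exact le_top
      _ = ∫⁻ _ in ⋂ n, A n, ⊤ ∂μ := (setLIntegral_const _ _).symm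
      _ ≤ ∫⁻ ω in ⋂ n, A n, (T ω : ℝ≥0∞) ∂μ := lintegral_mono_ae hTtop
      _ ≤ ∫⁻ ω, (T ω : ℝ≥0∞) ∂μ := setLIntegral_le_lintegral _ _

end Survival

section IID

lemma measurable_restrictFin (n : ℕ) : Measurable fun (ω : ℕ → 𝒳) (i : Fin n) => ω i :=
  measurable_pi_lambda _ fun _ => measurable_pi_apply _

lemma natF_le_s11 (N : ℕ) : natF 𝒳 N ≤ MeasurableSpace.pi :=
  (measurable_restrictFin N).comap_le

lemma measurable_natF_apply {N i : ℕ} (hi : i < N) :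
    Measurable[natF 𝒳 N] fun ω : ℕ → 𝒳 => ω i :=
  (measurable_pi_apply (⟨i, hi⟩ : Fin N)).comp
    (comap_measurable fun (ω : ℕ → 𝒳) (j : Fin N) => ω j)

variable {P : Measure 𝒳} {μ : Measure (ℕ → 𝒳)}

theorem IsIID.lintegral_mul_apply [SigmaFinite P] (hμ : IsIID P μ) {N : ℕ}
    {f : (ℕ → 𝒳) → ℝ≥0∞} (hf : Measurable[natF 𝒳 N] f) {g : 𝒳 → ℝ≥0∞} (hg : Measurable g) :
    ∫⁻ ω, f ω * g (ω N) ∂μ = (∫⁻ ω, f ω ∂μ) * ∫⁻ x, g x ∂P := by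
  obtain ⟨φ, hφ, rfl⟩ := hf.exists_eq_measurable_comp
  set e := MeasurableEquiv.piFinSuccAbove (fun _ : Fin (N + 1) => 𝒳) (Fin.last N)
  have hF : Measurable fun z : 𝒳 × (Fin N → 𝒳) => g z.1 * φ z.2 :=
    (hg.comp measurable_fst).mul (hφ.comp measurable_snd)
  calc ∫⁻ ω, (φ ∘ fun ω (i : Fin N) => ω i) ω * g (ω N) ∂μ
      = ∫⁻ y, g (e y).1 * φ (e y).2 ∂(Measure.pi fun _ : Fin (N + 1) => P) := by
        rw [← hμ.2 (N + 1), lintegral_map (f := fun y => g (e y).1 * φ (e y).2)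
          (hF.comp e.measurable) (measurable_restrictFin _)]
        congr with ω
        simp only [Function.comp_apply, mul_comm, MeasurableEquiv.piFinSuccAbove_apply,
          Fin.insertNthEquiv_last, Fin.snocEquiv_symm_apply, Fin.val_last, e]
        rfl
    _ = ∫⁻ z, g z.1 * φ z.2 ∂(P.prod (Measure.pi fun _ : Fin N => P)) :=
        (measurePreserving_piFinSuccAbove (fun _ => P) (Fin.last N)).lintegral_comp hF
    _ = (∫⁻ ω, (φ ∘ fun ω (i : Fin N) => ω i) ω ∂μ) * ∫⁻ x, g x ∂P := by
        rw [lintegral_prod_mul hg.aemeasurable hφ.aemeasurable, ← hμ.2 N,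
          lintegral_map hφ (measurable_restrictFin N), mul_comm]
        rfl

theorem IsIID.setLIntegral_mul_apply [SigmaFinite P] (hμ : IsIID P μ) {N : ℕ}
    {A : Set (ℕ → 𝒳)} (hA : MeasurableSet[natF 𝒳 N] A)
    {f : (ℕ → 𝒳) → ℝ≥0∞} (hf : Measurable[natF 𝒳 N] f) {g : 𝒳 → ℝ≥0∞} (hg : Measurable g) :
    ∫⁻ ω in A, f ω * g (ω N) ∂μ = (∫⁻ ω in A, f ω ∂μ) * ∫⁻ x, g x ∂P := by
  have hA' := natF_le_s11 N _ hA
  simp_rw [← lintegral_indicator hA', Set.indicator_mul_left]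
  exact hμ.lintegral_mul_apply (hf.indicator hA) hg

theorem IsIID.ae_forall_mem [SigmaFinite P] (hμ : IsIID P μ) {s : Set 𝒳} (hs : MeasurableSet s)
    (hPs : P sᶜ = 0) : ∀ᵐ ω ∂μ, ∀ i, ω i ∈ s := by
  refine ae_all_iff.2 fun i => ?_
  have h := Measure.pi_eval_preimage_null (fun _ : Fin (i + 1) => P) (i := Fin.last i) hPs
  rwa [← hμ.2, Measure.map_apply (measurable_restrictFin _)
    (hs.compl.preimage (measurable_pi_apply _))] at h

end IID

section BoundedMean

variable {m lam x : ℝ} {Lam : Set ℝ} {w : ℝ → ℝ} {n : ℕ} {ω : ℕ → ℝ}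

lemma measurable_Lfun (m lam : ℝ) : Measurable (Lfun m lam) := by
  unfold Lfun; fun_prop

lemma Lfun_nonneg (hm : 0 < m) (hl : lam ∈ Icc (0 : ℝ) 1) (hx : 0 ≤ x) : 0 ≤ Lfun m lam x := by
  have : 0 ≤ lam * (x / m) := mul_nonneg hl.1 (div_nonneg hx hm.le)
  rw [Lfun, mul_sub, mul_one]
  linarith [hl.2]

lemma Lfun_le (hm : 0 < m) (hl : lam ∈ Icc (0 : ℝ) 1) (hx : x ∈ Icc (0 : ℝ) 1) :
    Lfun m lam x ≤ 1 + m⁻¹ := by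
  have hxm : x / m ≤ m⁻¹ := by rw [div_eq_mul_inv]; nlinarith [inv_pos.2 hm, hx.2]
  have : lam * (x / m) ≤ x / m := mul_le_of_le_one_left (div_nonneg hx.1 hm.le) hl.2
  rw [Lfun, mul_sub, mul_one]
  linarith [hl.1]

lemma SR_nonneg (hm : 0 < m) (hl : lam ∈ Icc (0 : ℝ) 1) (hω : ∀ i < n, 0 ≤ ω i) :
    0 ≤ SR m lam n ω :=
  Finset.sum_nonneg fun _ _ => Finset.prod_nonneg fun i hi =>
    Lfun_nonneg hm hl (hω i (Finset.mem_Ico.1 hi).2)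

lemma SR_le (hm : 0 < m) (hl : lam ∈ Icc (0 : ℝ) 1) (hω : ∀ i < n, ω i ∈ Icc (0 : ℝ) 1) :
    SR m lam n ω ≤ n * (1 + m⁻¹) ^ n := by
  have h1 : (1 : ℝ) ≤ 1 + m⁻¹ := le_add_of_nonneg_right (inv_nonneg.2 hm.le)
  calc SR m lam n ω ≤ ∑ k ∈ Finset.range n, (1 + m⁻¹) ^ n := by
        refine Finset.sum_le_sum fun k _ => ?_
        calc ∏ i ∈ Finset.Ico k n, Lfun m lam (ω i) ≤ ∏ _i ∈ Finset.Ico k n, (1 + m⁻¹) :=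
              Finset.prod_le_prod (fun i hi => Lfun_nonneg hm hl (hω i (Finset.mem_Ico.1 hi).2).1)
                fun i hi => Lfun_le hm hl (hω i (Finset.mem_Ico.1 hi).2)
          _ ≤ (1 + m⁻¹) ^ n := by
              rw [Finset.prod_const, Nat.card_Ico]; exact pow_le_pow_right₀ h1 (n.sub_le k)
    _ = n * (1 + m⁻¹) ^ n := by simp

/-- `SR` with each factor replaced by its positive part: the recursion `ennSR_succ` then holds
without side conditions, and `ennSR` agrees with `SR` on data in `[0, 1]` (`ofReal_SR`). -/
def ennSR (m lam : ℝ) (n : ℕ) (ω : ℕ → ℝ) : ℝ≥0∞ :=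
  ∑ k ∈ Finset.range n, ∏ i ∈ Finset.Ico k n, ENNReal.ofReal (Lfun m lam (ω i))

def ennMixSR (m : ℝ) (Lam : Set ℝ) (w : ℝ → ℝ) (n : ℕ) (ω : ℕ → ℝ) : ℝ≥0∞ :=
  ∑' lam : Lam, ENNReal.ofReal (w lam) * ennSR m lam n ω

lemma ennSR_succ (m lam : ℝ) (n : ℕ) (ω : ℕ → ℝ) :
    ennSR m lam (n + 1) ω = (ennSR m lam n ω + 1) * ENNReal.ofReal (Lfun m lam (ω n)) := by
  simp only [ennSR]
  rw [Finset.sum_range_succ, add_mul, one_mul, Finset.sum_mul, Nat.Ico_succ_singleton,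
    Finset.prod_singleton]
  congr 1
  exact Finset.sum_congr rfl fun k hk =>
    Finset.prod_Ico_succ_top (Finset.mem_range.1 hk).le _

lemma ennMixSR_zero (m : ℝ) (Lam : Set ℝ) (w : ℝ → ℝ) : ennMixSR m Lam w 0 = 0 := by
  funext ω; simp [ennMixSR, ennSR]

lemma measurable_ennSR {N : ℕ} (hn : n ≤ N) : Measurable[natF ℝ N] (ennSR m lam n) :=
  Finset.measurable_sum _ fun _ _ => Finset.measurable_prod _ fun _ hi =>
    ENNReal.measurable_ofReal.comp <| (measurable_Lfun m lam).comp <|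
      measurable_natF_apply ((Finset.mem_Ico.1 hi).2.trans_le hn)

lemma measurable_ennMixSR [Countable Lam] {N : ℕ} (hn : n ≤ N) :
    Measurable[natF ℝ N] (ennMixSR m Lam w n) :=
  letI : MeasurableSpace (ℕ → ℝ) := natF ℝ N
  Measurable.tsum fun _ => measurable_const.mul (measurable_ennSR hn)

lemma ofReal_SR (hm : 0 < m) (hl : lam ∈ Icc (0 : ℝ) 1) (hω : ∀ i < n, 0 ≤ ω i) :
    ENNReal.ofReal (SR m lam n ω) = ennSR m lam n ω := by
  rw [SR, ENNReal.ofReal_sum_of_nonneg fun _ _ => Finset.prod_nonneg fun i hi =>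
    Lfun_nonneg hm hl (hω i (Finset.mem_Ico.1 hi).2)]
  exact Finset.sum_congr rfl fun _ _ => ENNReal.ofReal_prod_of_nonneg fun i hi =>
    Lfun_nonneg hm hl (hω i (Finset.mem_Ico.1 hi).2)

lemma ofReal_mixSR (hm : 0 < m) (hLam : ∀ l ∈ Lam, l ∈ Icc (0 : ℝ) 1)
    (hw : ∀ l ∈ Lam, 0 ≤ w l) (hws : Summable fun l : Lam => w l)
    (hω : ∀ i < n, ω i ∈ Icc (0 : ℝ) 1) :
    ENNReal.ofReal (mixSR m Lam w n ω) = ennMixSR m Lam w n ω := by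
  have hnn : ∀ l : Lam, 0 ≤ w l * SR m l n ω := fun l =>
    mul_nonneg (hw l l.2) (SR_nonneg hm (hLam l l.2) fun i hi => (hω i hi).1)
  have hsum : Summable fun l : Lam => w l * SR m l n ω :=
    (hws.mul_right (n * (1 + m⁻¹) ^ n)).of_nonneg_of_le hnn fun l =>
      mul_le_mul_of_nonneg_left (SR_le hm (hLam l l.2) hω) (hw l l.2)
  rw [mixSR, ENNReal.ofReal_tsum_of_nonneg hnn hsum]
  exact tsum_congr fun l => by
    rw [ENNReal.ofReal_mul (hw l l.2), ofReal_SR hm (hLam l l.2) fun i hi => (hω i hi).1]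

lemma lintegral_ofReal_Lfun_le_one {P : Measure ℝ} (hm : 0 < m) (hl : lam ∈ Icc (0 : ℝ) 1)
    (hP : P ∈ PclassBM m) : ∫⁻ x, ENNReal.ofReal (Lfun m lam x) ∂P ≤ 1 := by
  obtain ⟨_, hP01, hPm⟩ := hP
  have h01 : ∀ᵐ x ∂P, x ∈ Icc (0 : ℝ) 1 := measure_eq_zero_iff_ae_notMem.1 hP01 |>.mono
    fun _ hx => not_not.1 hx
  have hid : Integrable (fun x => x) P := Integrable.of_bound (by fun_prop) 1 <|
    h01.mono fun x hx => by rw [Real.norm_eq_abs, abs_le]; constructor <;> linarith [hx.1, hx.2]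
  have hL : Lfun m lam = fun x => (1 - lam) + lam / m * x := by
    funext x; rw [Lfun]; ring
  have hint : Integrable (Lfun m lam) P := hL ▸ (integrable_const _).add (hid.const_mul _)
  have hnn : 0 ≤ᵐ[P] Lfun m lam := h01.mono fun x hx => Lfun_nonneg hm hl hx.1
  have hmean : lam / m * ∫ x, x ∂P ≤ lam := by
    calc lam / m * ∫ x, x ∂P ≤ lam / m * m := by gcongr; exact div_nonneg hl.1 hm.le
      _ = lam := div_mul_cancel₀ lam hm.ne'
  rw [← ofReal_integral_eq_lintegral_ofReal hint hnn, ← ENNReal.ofReal_one]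
  refine ENNReal.ofReal_le_ofReal ?_
  rw [hL, integral_add (integrable_const _) (hid.const_mul _), integral_const, integral_const_mul]
  simp only [probReal_univ, smul_eq_mul, one_mul]
  linarith

lemma setLIntegral_ennMixSR_succ_le [Countable Lam] {P : Measure ℝ} {μ : Measure (ℕ → ℝ)}
    (hm : 0 < m) (hLam : ∀ l ∈ Lam, l ∈ Icc (0 : ℝ) 1)
    (hw : ∑' l : Lam, ENNReal.ofReal (w l) ≤ 1) (hP : P ∈ PclassBM m) (hμ : IsIID P μ)
    {N : ℕ} {A : Set (ℕ → ℝ)} (hA : MeasurableSet[natF ℝ N] A) :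
    ∫⁻ ω in A, ennMixSR m Lam w (N + 1) ω ∂μ ≤
      ∫⁻ ω in A, ennMixSR m Lam w N ω ∂μ + μ A := by
  have := hP.1
  have hSR : ∀ l : Lam, Measurable[natF ℝ N] fun ω => ennSR m l N ω + 1 := fun _ =>
    (measurable_ennSR le_rfl).add_const 1
  have hSR' : ∀ l : Lam, Measurable fun ω => ennSR m l N ω + 1 := fun l =>
    (hSR l).mono (natF_le_s11 N) le_rfl
  have hL : ∀ l : Lam, Measurable fun x => ENNReal.ofReal (Lfun m l x) := fun l =>
    ENNReal.measurable_ofReal.comp (measurable_Lfun m l)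
  have hprod : ∀ l : Lam, Measurable fun ω : ℕ → ℝ =>
      (ennSR m l N ω + 1) * ENNReal.ofReal (Lfun m l (ω N)) := fun l =>
    (hSR' l).mul ((hL l).comp (measurable_pi_apply N))
  calc ∫⁻ ω in A, ennMixSR m Lam w (N + 1) ω ∂μ
      = ∑' l : Lam, ENNReal.ofReal (w l) *
          ∫⁻ ω in A, (ennSR m l N ω + 1) * ENNReal.ofReal (Lfun m l (ω N)) ∂μ := by
        simp_rw [ennMixSR, ennSR_succ]
        rw [lintegral_tsum fun l => ((hprod l).const_mul _).aemeasurable]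
        exact tsum_congr fun l => lintegral_const_mul _ (hprod l)
    _ ≤ ∑' l : Lam, ENNReal.ofReal (w l) * ∫⁻ ω in A, (ennSR m l N ω + 1) ∂μ := by
        refine ENNReal.tsum_le_tsum fun l => mul_le_mul_right ?_ _
        rw [hμ.setLIntegral_mul_apply hA (hSR l) (hL l)]
        exact mul_le_of_le_one_right' (lintegral_ofReal_Lfun_le_one hm (hLam l l.2) hP)
    _ = ∫⁻ ω in A, ∑' l : Lam, ENNReal.ofReal (w l) * (ennSR m l N ω + 1) ∂μ := by
        rw [lintegral_tsum fun l => ((hSR' l).const_mul _).aemeasurable]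
        exact tsum_congr fun l => (lintegral_const_mul _ (hSR' l)).symm
    _ = ∫⁻ ω in A, (ennMixSR m Lam w N ω + ∑' l : Lam, ENNReal.ofReal (w l)) ∂μ := by
        simp_rw [mul_add, mul_one, ENNReal.tsum_add, ennMixSR]
    _ ≤ ∫⁻ ω in A, (ennMixSR m Lam w N ω + 1) ∂μ := by gcongr
    _ = ∫⁻ ω in A, ennMixSR m Lam w N ω ∂μ + μ A := by
        rw [lintegral_add_right _ measurable_const, setLIntegral_const, one_mul]

lemma lt_TBM_of_mem_survivalSet (hm : 0 < m) (hLam : ∀ l ∈ Lam, l ∈ Icc (0 : ℝ) 1)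
    (hw : ∀ l ∈ Lam, 0 ≤ w l) (hws : Summable fun l : Lam => w l) {γ : ℝ}
    (hω : ∀ i, ω i ∈ Icc (0 : ℝ) 1)
    (hn : ω ∈ survivalSet (ennMixSR m Lam w) (ENNReal.ofReal γ) n) :
    (n : ℕ∞) < TBM m Lam w γ ω := by
  rw [← ENat.add_one_le_iff (ENat.natCast_ne_top n)]
  refine le_iInf₂ fun k ⟨_, hk⟩ => ?_
  by_contra! hkn
  have hlt := hn k (Nat.lt_succ_iff.1 (by exact_mod_cast hkn))
  rw [← ofReal_mixSR hm hLam hw hws fun i _ => hω i] at hlt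
  exact (ENNReal.ofReal_le_ofReal hk).not_gt hlt

end BoundedMean

theorem ARL_calibration_bounded_mean_general
    (m : ℝ) (hm : m ∈ Set.Ioo (0 : ℝ) 1)
    (Lam : Set ℝ) (hLsub : Lam ⊆ Set.Ioo (0 : ℝ) 1) (hLcount : Lam.Countable)
    (w : ℝ → ℝ) (hw : ∀ lam ∈ Lam, 0 < w lam)
    (hwsum : HasSum (fun lam : Lam => w lam) 1)
    (γ : ℝ)
    (P : Measure ℝ) (hP : P ∈ PclassBM m)
    (μinf : Measure (ℕ → ℝ)) (hμinf : IsIID P μinf) :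
    ENNReal.ofReal γ ≤ ∫⁻ ω, (TBM m Lam w γ ω : ℝ≥0∞) ∂μinf := by
  have := hP.1
  have := hμinf.1
  have := hLcount.to_subtype
  have hLam : ∀ l ∈ Lam, l ∈ Icc (0 : ℝ) 1 := fun l hl => Ioo_subset_Icc_self (hLsub hl)
  have hw0 : ∀ l ∈ Lam, 0 ≤ w l := fun l hl => (hw l hl).le
  have hw1 : ∑' l : Lam, ENNReal.ofReal (w l) = 1 := by
    rw [← ENNReal.ofReal_tsum_of_nonneg (fun l : Lam => hw0 l l.2) hwsum.summable, hwsum.tsum_eq,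
      ENNReal.ofReal_one]
  refine le_lintegral_of_survivalSet
    (fun n => (measurable_ennMixSR le_rfl).mono (natF_le_s11 n) le_rfl) (ennMixSR_zero m Lam w)
    (fun N => setLIntegral_ennMixSR_succ_le hm.1 hLam hw1.le hP hμinf
      (measurableSet_survivalSet fun _ hk => measurable_ennMixSR hk)) ?_
  filter_upwards [hμinf.ae_forall_mem measurableSet_Icc hP.2.1] with ω hω n hn
  exact lt_TBM_of_mem_survivalSet hm.1 hLam hw0 hwsum.summable hω hn

/-- **Theorem 3.1, part 1 (ARL calibration of the bounded-mean e-detector).** For every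
`γ > 0` and every `P ∈ 𝒫_m`, `E_{P^∞}[T_γ^{BM}] ≥ γ`; consequently
`inf_{P ∈ 𝒫_m} E_{P^∞}[T_γ^{BM}] ≥ γ`. -/
theorem ARL_calibration_bounded_mean
    (m : ℝ) (hm : m ∈ Set.Ioo (0 : ℝ) 1)
    (Lam : Set ℝ) (hLsub : Lam ⊆ Set.Ioo (0 : ℝ) 1) (hLcount : Lam.Countable)
    (hLdense : ∀ x ∈ Set.Ioo (0 : ℝ) 1, x ∈ closure Lam)
    (w : ℝ → ℝ) (hw : ∀ lam ∈ Lam, 0 < w lam)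
    (hwsum : HasSum (fun lam : Lam => w lam) 1)
    (γ : ℝ) (hγ : 0 < γ)
    (P : Measure ℝ) (hP : P ∈ PclassBM m)
    (μinf : Measure (ℕ → ℝ)) (hμinf : IsIID P μinf) :
    ENNReal.ofReal γ ≤ ∫⁻ ω, (TBM m Lam w γ ω : ℝ≥0∞) ∂μinf :=
  ARL_calibration_bounded_mean_general m hm Lam hLsub hLcount w hw hwsum γ P hP μinf hμinf
end
end

section
/- Positivity and finiteness of the KL projection (Lemma 3.2, first claim): Let m ∈ (0,1) and let Q be a probability measure on [0,1] with mean E_Q[X] = q > m. Then 0 < KL_inf(Q;m) < ∞. -/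
open MeasureTheory Filter Set
open scoped ENNReal NNReal Classical

noncomputable section

variable {𝒳 : Type*} [MeasurableSpace 𝒳]

/-! `KL_inf(Q;m)` is finite because `P₀ = (m/q) Q + (1 - m/q) δ₀` lies in `𝒫_m` and `Q ≤ (q/m) P₀`,
so `dQ/dP₀ ≤ q/m` and `KL(Q‖P₀) ≤ log (q/m)`.

It is positive by the Donsker–Varadhan inequality `KL(Q‖P) ≥ E_Q[f] - log E_P[e^f]` with
`f = log L_λ`, where `L_λ(x) = 1 + λ(x/m - 1)` is the betting factor: `E_P[L_λ] ≤ 1` for every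
`P ∈ 𝒫_m`, so `KL(Q‖P) ≥ E_Q[log L_λ]` uniformly in `P`, and `log (1 + u) ≥ u - 2u²` makes this
at least `(q - m)²/8` for `λ = m(q - m)/4`. -/

open Real

section

variable {α : Type*} [MeasurableSpace α] {μ ν : Measure α}

lemma integral_sub_log_integral_exp_le_integral_llr [IsProbabilityMeasure μ]
    [IsProbabilityMeasure ν] {f : α → ℝ} (hμν : μ ≪ ν) (hfμ : Integrable f μ)
    (hfν : Integrable (fun x ↦ exp (f x)) ν) (h_int : Integrable (llr μ ν) μ) :
    ∫ x, f x ∂μ - log (∫ x, exp (f x) ∂ν) ≤ ∫ x, llr μ ν x ∂μ := by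
  have := isProbabilityMeasure_tilted hfν
  have h := InformationTheory.integral_llr_add_sub_measure_univ_nonneg
    (hμν.trans (absolutelyContinuous_tilted hfν)) (integrable_llr_tilted_right hμν hfμ h_int hfν)
  rw [integral_llr_tilted_right hμν hfμ hfν h_int] at h
  simp only [probReal_univ] at h
  linarith

lemma MeasureTheory.Measure.rnDeriv_le_of_le_smul [SigmaFinite ν] {c : ℝ≥0∞} (h : μ ≤ c • ν) :
    μ.rnDeriv ν ≤ᵐ[ν] fun _ ↦ c := by
  refine ae_le_of_forall_setLIntegral_le_of_sigmaFinite (μ.measurable_rnDeriv ν) fun s _ _ ↦ ?_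
  rw [setLIntegral_const, ← smul_eq_mul, ← Measure.smul_apply]
  exact (Measure.setLIntegral_rnDeriv_le s).trans (h s)

lemma integrable_llr_of_le_smul [IsFiniteMeasure μ] [IsFiniteMeasure ν] {c : ℝ≥0} (h : μ ≤ c • ν) :
    Integrable (llr μ ν) μ := by
  have hμν : μ ≪ ν := Measure.absolutelyContinuous_of_le_smul h
  rw [← integrable_rnDeriv_mul_log_iff hμν]
  obtain ⟨B, hB⟩ := isCompact_Icc.exists_bound_of_continuousOn
    (Real.continuous_mul_log.continuousOn (s := Icc 0 (c : ℝ)))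
  refine Integrable.of_bound (by fun_prop) B ?_
  filter_upwards [Measure.rnDeriv_le_of_le_smul h] with x hc
  exact hB _ ⟨ENNReal.toReal_nonneg, ENNReal.toReal_le_of_le_ofReal c.2 (by simpa using hc)⟩

lemma KL_lt_top_of_le_smul [IsFiniteMeasure μ] [IsFiniteMeasure ν] {c : ℝ≥0} (h : μ ≤ c • ν) :
    KL μ ν < ⊤ := by
  rw [KL, if_pos ⟨Measure.absolutelyContinuous_of_le_smul h, integrable_llr_of_le_smul h⟩]
  exact ENNReal.ofReal_lt_top

lemma MeasureTheory.Measure.le_inv_smul_smul_add (μ ν : Measure α) {a : ℝ≥0} (ha : a ≠ 0) :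
    μ ≤ a⁻¹ • (a • μ + ν) :=
  calc μ = a⁻¹ • (a • μ) := by rw [smul_smul, inv_mul_cancel₀ ha, one_smul]
    _ ≤ a⁻¹ • (a • μ + ν) := by gcongr; exact Measure.le_add_right le_rfl

end

lemma ContinuousOn.integrable_of_ae_mem_compact {X E : Type*} [TopologicalSpace X] [T2Space X]
    [MeasurableSpace X] [OpensMeasurableSpace X] [NormedAddCommGroup E] {μ : Measure X}
    [IsFiniteMeasure μ] {K : Set X} {f : X → E} (hf : ContinuousOn f K) (hK : IsCompact K)
    (hμK : ∀ᵐ x ∂μ, x ∈ K) : Integrable f μ :=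
  Measure.restrict_eq_self_of_ae_mem hμK ▸ hf.integrableOn_compact hK

lemma smul_add_smul_dirac_zero_mem_PclassBM {Q : Measure ℝ} [IsProbabilityMeasure Q]
    (hQ : ∀ᵐ x ∂Q, x ∈ Icc (0 : ℝ) 1) {a : ℝ≥0} (ha : a ≤ 1) :
    a • Q + (1 - a) • Measure.dirac 0 ∈ PclassBM (a * ∫ x, x ∂Q) := by
  have hid : Integrable (fun x : ℝ ↦ x) Q :=
    continuousOn_id.integrable_of_ae_mem_compact isCompact_Icc hQ
  refine ⟨⟨?_⟩, ?_, ?_⟩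
  · simp only [Measure.add_apply, Measure.smul_apply, measure_univ, ENNReal.smul_def, smul_eq_mul,
      mul_one, ENNReal.coe_sub, ENNReal.coe_one]
    exact add_tsub_cancel_of_le (by exact_mod_cast ha)
  · have hQ' : Q (Icc 0 1)ᶜ = 0 := mem_ae_iff.1 hQ
    rw [Measure.add_apply, Measure.smul_apply, Measure.smul_apply, hQ']
    simp
  · rw [integral_add_measure hid.smul_measure_nnreal
      (integrable_dirac (by simp)).smul_measure_nnreal,
      integral_smul_nnreal_measure, integral_smul_nnreal_measure, integral_dirac]
    simp [NNReal.smul_def]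

lemma Lfun_pos {m lam x : ℝ} (hm : 0 < m) (hlam0 : 0 ≤ lam) (hlam1 : lam < 1) (hx : 0 ≤ x) :
    0 < Lfun m lam x := by
  rw [Lfun, mul_sub, mul_one]
  linarith [mul_nonneg hlam0 (div_nonneg hx hm.le)]

lemma integral_Lfun (m lam : ℝ) {P : Measure ℝ} [IsProbabilityMeasure P]
    (hid : Integrable (fun x : ℝ ↦ x) P) :
    ∫ x, Lfun m lam x ∂P = 1 + lam * ((∫ x, x ∂P) / m - 1) := by
  have hlin : Integrable (fun x : ℝ ↦ lam * (x / m - 1)) P :=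
    ((hid.div_const m).sub (integrable_const 1)).const_mul lam
  simp only [Lfun]
  rw [integral_add (integrable_const _) hlin, integral_const_mul,
    integral_sub (hid.div_const m) (integrable_const 1), integral_div]
  simp

lemma integral_Lfun_le_one {m lam : ℝ} (hm : 0 < m) (hlam : 0 ≤ lam) {P : Measure ℝ}
    (hP : P ∈ PclassBM m) : ∫ x, Lfun m lam x ∂P ≤ 1 := by
  obtain ⟨hPprob, hPsupp, hPmean⟩ := hP
  rw [integral_Lfun m lam
    (continuousOn_id.integrable_of_ae_mem_compact isCompact_Icc (mem_ae_iff.2 hPsupp))]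
  have : (∫ x, x ∂P) / m - 1 ≤ 0 := by rw [sub_nonpos, div_le_one hm]; exact hPmean
  nlinarith

lemma sub_two_mul_sq_le_log_one_add {u : ℝ} (hu : -(1 / 2) ≤ u) : u - 2 * u ^ 2 ≤ log (1 + u) := by
  have hpos : 0 < 1 + u := by linarith
  have h : 1 - (1 + u)⁻¹ = u / (1 + u) := by field_simp; ring
  have hdiv : u - 2 * u ^ 2 ≤ u / (1 + u) := by
    rw [le_div_iff₀ hpos]
    nlinarith [mul_nonneg (sq_nonneg u) (by linarith : (0 : ℝ) ≤ 1 + 2 * u)]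
  linarith [one_sub_inv_le_log_of_pos hpos]

lemma Lfun_sub_one_sub_sq_le_log_Lfun {m lam x : ℝ} (hm0 : 0 < m) (hm1 : m ≤ 1) (hlam0 : 0 ≤ lam)
    (hlam : lam ≤ 1 / 2) (hx : x ∈ Icc (0 : ℝ) 1) :
    Lfun m lam x - 1 - 2 * (lam / m) ^ 2 ≤ log (Lfun m lam x) := by
  have hxm : 0 ≤ x / m := div_nonneg hx.1 hm0.le
  have hxm1 : x / m ≤ 1 / m := div_le_div_of_nonneg_right hx.2 hm0.le
  have hm1' : 1 ≤ 1 / m := by rw [le_div_iff₀ hm0]; linarith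
  have hsq : (lam * (x / m - 1)) ^ 2 ≤ (lam / m) ^ 2 := by
    rw [div_eq_mul_one_div lam m]
    exact sq_le_sq' (by nlinarith) (by nlinarith)
  have := sub_two_mul_sq_le_log_one_add (u := lam * (x / m - 1)) (by nlinarith)
  rw [Lfun]
  linarith

lemma continuous_Lfun (m lam : ℝ) : Continuous (Lfun m lam) := by
  unfold Lfun; fun_prop

lemma integrable_Lfun (m lam : ℝ) {μ : Measure ℝ} [IsFiniteMeasure μ]
    (hμ : ∀ᵐ x ∂μ, x ∈ Icc (0 : ℝ) 1) : Integrable (Lfun m lam) μ :=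
  (continuous_Lfun m lam).continuousOn.integrable_of_ae_mem_compact isCompact_Icc hμ

lemma integrable_log_Lfun {m lam : ℝ} (hm : 0 < m) (hlam0 : 0 ≤ lam) (hlam1 : lam < 1)
    {μ : Measure ℝ} [IsFiniteMeasure μ] (hμ : ∀ᵐ x ∂μ, x ∈ Icc (0 : ℝ) 1) :
    Integrable (fun x ↦ log (Lfun m lam x)) μ :=
  ((continuous_Lfun m lam).continuousOn.log fun _ hx ↦ (Lfun_pos hm hlam0 hlam1 hx.1).ne')
    |>.integrable_of_ae_mem_compact isCompact_Icc hμ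

lemma le_integral_log_Lfun {m lam : ℝ} (hm0 : 0 < m) (hm1 : m ≤ 1) (hlam0 : 0 ≤ lam)
    (hlam : lam ≤ 1 / 2) {Q : Measure ℝ} [IsProbabilityMeasure Q]
    (hQ : ∀ᵐ x ∂Q, x ∈ Icc (0 : ℝ) 1) :
    lam * ((∫ x, x ∂Q) / m - 1) - 2 * (lam / m) ^ 2 ≤ ∫ x, log (Lfun m lam x) ∂Q := by
  have hL := integrable_Lfun m lam hQ
  have hL1 : Integrable (fun x ↦ Lfun m lam x - 1) Q := hL.sub (integrable_const 1)
  calc lam * ((∫ x, x ∂Q) / m - 1) - 2 * (lam / m) ^ 2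
      = ∫ x, (Lfun m lam x - 1 - 2 * (lam / m) ^ 2) ∂Q := by
        rw [integral_sub hL1 (integrable_const _),
          integral_sub hL (integrable_const 1),
          integral_Lfun m lam (continuousOn_id.integrable_of_ae_mem_compact isCompact_Icc hQ)]
        simp
    _ ≤ ∫ x, log (Lfun m lam x) ∂Q :=
        integral_mono_ae (hL1.sub (integrable_const _))
          (integrable_log_Lfun hm0 hlam0 (by linarith) hQ)
          (hQ.mono fun x hx ↦ Lfun_sub_one_sub_sq_le_log_Lfun hm0 hm1 hlam0 hlam hx)

lemma ofReal_integral_log_Lfun_le_KL {m lam : ℝ} (hm : 0 < m) (hlam0 : 0 ≤ lam) (hlam1 : lam < 1)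
    {Q : Measure ℝ} [IsProbabilityMeasure Q] (hQ : ∀ᵐ x ∂Q, x ∈ Icc (0 : ℝ) 1)
    {P : Measure ℝ} (hP : P ∈ PclassBM m) :
    ENNReal.ofReal (∫ x, log (Lfun m lam x) ∂Q) ≤ KL Q P := by
  have := hP.1
  have hPae : ∀ᵐ x ∂P, x ∈ Icc (0 : ℝ) 1 := mem_ae_iff.2 hP.2.1
  have hexp : (fun x ↦ exp (log (Lfun m lam x))) =ᵐ[P] Lfun m lam :=
    hPae.mono fun x hx ↦ exp_log (Lfun_pos hm hlam0 hlam1 hx.1)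
  unfold KL
  split_ifs with h
  swap; · exact le_top
  refine ENNReal.ofReal_le_ofReal ?_
  have hDV := integral_sub_log_integral_exp_le_integral_llr h.1
    (integrable_log_Lfun hm hlam0 hlam1 hQ) ((integrable_congr hexp).2 (integrable_Lfun m lam hPae))
    h.2
  have hlog : log (∫ x, Lfun m lam x ∂P) ≤ 0 :=
    log_nonpos (integral_nonneg_of_ae (hPae.mono fun x hx ↦ (Lfun_pos hm hlam0 hlam1 hx.1).le))
      (integral_Lfun_le_one hm hlam0 hP)
  rw [integral_congr_ae hexp] at hDV
  linarith

lemma KLinfBM_pos {m : ℝ} (hm0 : 0 < m) (hm1 : m ≤ 1) {Q : Measure ℝ} [IsProbabilityMeasure Q]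
    (hQ : ∀ᵐ x ∂Q, x ∈ Icc (0 : ℝ) 1) (hqm : m < ∫ x, x ∂Q) : 0 < KLinfBM Q m := by
  set q := ∫ x, x ∂Q
  have hq1 : q ≤ 1 := (integral_mono_ae
    (continuousOn_id.integrable_of_ae_mem_compact isCompact_Icc hQ) (integrable_const 1)
    (hQ.mono fun x hx ↦ hx.2)).trans_eq (by simp)
  set lam := m * (q - m) / 4 with hlam_def
  have hlam0 : 0 ≤ lam := div_nonneg (mul_nonneg hm0.le (by linarith)) (by norm_num)
  have hlam_half : lam ≤ 1 / 2 := by rw [hlam_def]; nlinarith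
  have hbound := le_integral_log_Lfun hm0 hm1 hlam0 hlam_half hQ
  have hval : lam * (q / m - 1) - 2 * (lam / m) ^ 2 = (q - m) ^ 2 / 8 := by
    field_simp; ring
  rw [hval] at hbound
  calc 0 < ENNReal.ofReal (∫ x, log (Lfun m lam x) ∂Q) :=
        ENNReal.ofReal_pos.2 (lt_of_lt_of_le (by nlinarith) hbound)
    _ ≤ KLinfBM Q m :=
        le_iInf₂ fun P hP ↦ ofReal_integral_log_Lfun_le_KL hm0 hlam0 (by linarith) hQ hP

lemma KLinfBM_lt_top {m : ℝ} (hm0 : 0 < m) {Q : Measure ℝ} [IsProbabilityMeasure Q]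
    (hQ : ∀ᵐ x ∂Q, x ∈ Icc (0 : ℝ) 1) (hqm : m < ∫ x, x ∂Q) : KLinfBM Q m < ⊤ := by
  set q := ∫ x, x ∂Q
  have hq0 : 0 < q := hm0.trans hqm
  set a : ℝ≥0 := ⟨m / q, (div_pos hm0 hq0).le⟩
  have ha0 : a ≠ 0 := ne_of_gt (show (0 : ℝ) < m / q from div_pos hm0 hq0)
  have hP₀ := smul_add_smul_dirac_zero_mem_PclassBM hQ (a := a)
    (show m / q ≤ 1 from (div_le_one hq0).2 hqm.le)
  rw [show (a : ℝ) * q = m from div_mul_cancel₀ m hq0.ne'] at hP₀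
  have := hP₀.1
  calc KLinfBM Q m ≤ KL Q (a • Q + (1 - a) • Measure.dirac 0) := iInf₂_le _ hP₀
    _ < ⊤ := KL_lt_top_of_le_smul (Measure.le_inv_smul_smul_add Q _ ha0)

/-- **Lemma 3.2, first claim (positivity and finiteness of the KL projection).** If `Q` is
a probability measure on `[0,1]` with mean `q > m`, then `0 < KL_inf(Q;m) < ∞`. -/
theorem KLinf_pos_and_finite
    (m : ℝ) (hm : m ∈ Set.Ioo (0 : ℝ) 1)
    (Q : Measure ℝ) (hQprob : IsProbabilityMeasure Q)
    (hQsupp : Q (Set.Icc (0 : ℝ) 1)ᶜ = 0)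
    (q : ℝ) (hq : ∫ x, x ∂Q = q) (hqm : m < q) :
    0 < KLinfBM Q m ∧ KLinfBM Q m < ⊤ := by
  obtain ⟨hm0, hm1⟩ := hm
  have hQ : ∀ᵐ x ∂Q, x ∈ Icc (0 : ℝ) 1 := mem_ae_iff.2 hQsupp
  subst hq
  exact ⟨KLinfBM_pos hm0 hm1.le hQ hqm, KLinfBM_lt_top hm0 hQ hqm⟩
end
end
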